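/- arXiv:1906.08611 — 5 statements merged into one kernel-verified Lean document; each statement's English description precedes it below -/
import Mathlib

section
/- Fix sample points x₁,…,xₙ ∈ X, and define the sample value Vₙ(π) = (1/n) Σᵢ Σ_a π(a|xᵢ) μ(a|xᵢ) and its retargeted version Rₙ(π; w, ρ) = (1/n) Σᵢ w(xᵢ) Σ_a (π(a|xᵢ) − ρ(a|xᵢ)) μ(a|xᵢ). Suppose there exists π̄ ∈ Π₀ that is pointwise optimal, i.e., for every i and a, π̄(a|xᵢ)(max_{a'} μ(a'|xᵢ) − μ(a|xᵢ)) = 0. Then for every w : X → ℝ_{>0} and ρ : A × X → ℝ, argmax_{π∈Π₀} Rₙ(π; w, ρ) = (argmax_{π∈Π} Vₙ(π)) ∩ Π₀. -/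
open Finset

/-! The sample value of a policy at `xᵢ` is a `π(·|xᵢ)`-average of `μ(·|xᵢ)`, hence at most
`maxₐ μ(a|xᵢ)`, and the pointwise optimal `π̄ ∈ Π₀` attains this bound at every sample point.
Both `Vₙ` and `Rₙ` are, up to an additive constant, positively weighted sums of these values,
so over any class containing `π̄` their maximizers are exactly the policies attaining the bound
at every sample point. -/

theorem Finset.sum_mul_le_sup' {A : Type*} {s : Finset A} (hs : s.Nonempty) {p f : A → ℝ}
    (hp : ∀ a ∈ s, 0 ≤ p a) (hsum : ∑ a ∈ s, p a = 1) :
    ∑ a ∈ s, p a * f a ≤ s.sup' hs f :=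
  calc ∑ a ∈ s, p a * f a ≤ ∑ a ∈ s, p a * s.sup' hs f :=
        sum_le_sum fun a ha => mul_le_mul_of_nonneg_left (le_sup' f ha) (hp a ha)
    _ = s.sup' hs f := by rw [← sum_mul, hsum, one_mul]

theorem Finset.sum_mul_eq_of_mul_sub_eq_zero {A : Type*} {s : Finset A} {p f : A → ℝ} {m : ℝ}
    (hsum : ∑ a ∈ s, p a = 1) (h : ∀ a ∈ s, p a * (m - f a) = 0) :
    ∑ a ∈ s, p a * f a = m :=
  calc ∑ a ∈ s, p a * f a = ∑ a ∈ s, p a * m :=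
        sum_congr rfl fun a ha => by linarith [h a ha, mul_sub (p a) m (f a)]
    _ = m := by rw [← sum_mul, hsum, one_mul]

theorem setOf_forall_le_eq_setOf_eq_bound {α ι : Type*} [Fintype ι] {S : Set α}
    {v : α → ι → ℝ} {M : ι → ℝ} (hle : ∀ π ∈ S, ∀ i, v π i ≤ M i)
    {πbar : α} (hπbar : πbar ∈ S) (hbar : v πbar = M)
    {c : ι → ℝ} (hc : ∀ i, 0 < c i) (C : ℝ) {F : α → ℝ}
    (hF : ∀ π, F π = C + ∑ i, c i * v π i) :
    {π ∈ S | ∀ π' ∈ S, F π' ≤ F π} = {π ∈ S | v π = M} := by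
  ext π
  simp only [Set.mem_ofPred_eq, and_congr_right_iff]
  intro hπ
  have hweighted : ∀ i ∈ univ, c i * v π i ≤ c i * M i := fun i _ =>
    mul_le_mul_of_nonneg_left (hle π hπ i) (hc i).le
  constructor
  · intro hmax
    have hge : ∑ i, c i * M i ≤ ∑ i, c i * v π i := by
      have := hmax πbar hπbar
      rw [hF, hF, hbar] at this
      linarith
    have heq := (sum_eq_sum_iff_of_le hweighted).mp (le_antisymm (sum_le_sum hweighted) hge)
    exact funext fun i => mul_left_cancel₀ (hc i).ne' (heq i (mem_univ i))
  · intro hπM π' hπ'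
    rw [hF, hF, hπM]
    gcongr with i
    · exact (hc i).le
    · exact hle π' hπ' i

/-- sample version. With fixed sample points `x₁,…,xₙ` and some `π̄ ∈ Π₀`
pointwise optimal on the sample, the maximizers of the retargeted sample objective
`Rₙ(·; w, ρ)` over `Π₀` are exactly the maximizers of the sample value `Vₙ` over `Π`
intersected with `Π₀`, for every positive `w` and arbitrary `ρ`. -/
theorem stmt_3 {X A : Type} [Fintype A] [Nonempty A] {n : ℕ} (hn : 0 < n)
    (xs : Fin n → X)
    (μ : A → X → ℝ)
    (Pi : Set (X → A → ℝ))
    (hPi : Pi = {π | ∀ x, (∀ a, 0 ≤ π x a) ∧ ∑ a, π x a = 1})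
    (Pi0 : Set (X → A → ℝ)) (hPi0 : Pi0 ⊆ Pi)
    (πbar : X → A → ℝ) (hπbar : πbar ∈ Pi0)
    (hopt : ∀ i, ∀ a,
      πbar (xs i) a *
        (Finset.univ.sup' Finset.univ_nonempty (fun a' => μ a' (xs i)) - μ a (xs i)) = 0)
    (w : X → ℝ) (hw : ∀ x, 0 < w x)
    (ρ : A → X → ℝ)
    (Vn : (X → A → ℝ) → ℝ)
    (hVn : ∀ π, Vn π = (1 / (n : ℝ)) * ∑ i, ∑ a, π (xs i) a * μ a (xs i))
    (Rn : (X → A → ℝ) → ℝ)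
    (hRn : ∀ π, Rn π = (1 / (n : ℝ)) * ∑ i, w (xs i) * ∑ a, (π (xs i) a - ρ a (xs i)) * μ a (xs i)) :
    {π ∈ Pi0 | ∀ π' ∈ Pi0, Rn π' ≤ Rn π} =
      {π ∈ Pi | ∀ π' ∈ Pi, Vn π' ≤ Vn π} ∩ Pi0 := by
  set v : (X → A → ℝ) → Fin n → ℝ := fun π i => ∑ a, π (xs i) a * μ a (xs i)
  set M : Fin n → ℝ := fun i => univ.sup' univ_nonempty fun a => μ a (xs i)
  have hle : ∀ π ∈ Pi, ∀ i, v π i ≤ M i := fun π hπ i => by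
    rw [hPi] at hπ
    exact sum_mul_le_sup' _ (fun a _ => (hπ (xs i)).1 a) (hπ (xs i)).2
  have hbar : v πbar = M := by
    have hprob := hPi0 hπbar
    rw [hPi] at hprob
    exact funext fun i => sum_mul_eq_of_mul_sub_eq_zero (hprob (xs i)).2 fun a _ => hopt i a
  have hR := setOf_forall_le_eq_setOf_eq_bound (fun π hπ => hle π (hPi0 hπ)) hπbar hbar
    (c := fun i => (n : ℝ)⁻¹ * w (xs i)) (fun i => by have := hw (xs i); positivity)
    (-(1 / (n : ℝ)) * ∑ i, w (xs i) * ∑ a, ρ a (xs i) * μ a (xs i)) (F := Rn) fun π => by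
      simp only [hRn, v, sub_mul, sum_sub_distrib, mul_sub, mul_sum, neg_mul, sum_neg_distrib,
        one_div, mul_assoc]
      ring
  have hV := setOf_forall_le_eq_setOf_eq_bound hle (hPi0 hπbar) hbar
    (c := fun _ => 1 / (n : ℝ)) (fun _ => by positivity) 0 (F := Vn) fun π => by
      simp only [hVn, v, mul_sum, zero_add]
  rw [hR, hV]
  ext π
  simp only [Set.mem_inter_iff, Set.mem_ofPred_eq]
  exact ⟨fun ⟨h0, hM⟩ => ⟨⟨hPi0 h0, hM⟩, h0⟩, fun ⟨⟨_, hM⟩, h0⟩ => ⟨h0, hM⟩⟩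
end

section
/- Fix constants β₊, β₋ ≥ 0 and define f(z₊, z₋) = β₊ z₊² + β₋ z₋² + max{β₊(1 − 2z₊), β₋(1 − 2z₋)} for (z₊, z₋) ∈ ℝ². Then (1/2, 1/2) is a global minimizer of f: f(1/2, 1/2) = (β₊ + β₋)/4 and f(z₊, z₋) ≥ (β₊ + β₋)/4 for all z₊, z₋ ∈ ℝ. -/
/-- for `β₊, β₋ ≥ 0` and
`f(z₊, z₋) = β₊ z₊² + β₋ z₋² + max{β₊(1 − 2z₊), β₋(1 − 2z₋)}`,
the point `(1/2, 1/2)` is a global minimizer with value `(β₊ + β₋)/4`. -/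
theorem stmt_5 (βp βm : ℝ) (hβp : 0 ≤ βp) (hβm : 0 ≤ βm)
    (f : ℝ → ℝ → ℝ)
    (hf : ∀ zp zm, f zp zm =
      βp * zp ^ 2 + βm * zm ^ 2 + max (βp * (1 - 2 * zp)) (βm * (1 - 2 * zm))) :
    f (1 / 2) (1 / 2) = (βp + βm) / 4 ∧ ∀ zp zm, (βp + βm) / 4 ≤ f zp zm := by
  constructor
  · rw [hf]; norm_num; ring
  · intro zp zm
    rw [hf]
    have h1 : βp * (1 - 2 * zp) ≤ max (βp * (1 - 2 * zp)) (βm * (1 - 2 * zm)) := le_max_left _ _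
    have h2 : βm * (1 - 2 * zm) ≤ max (βp * (1 - 2 * zp)) (βm * (1 - 2 * zm)) := le_max_right _ _
    nlinarith [sq_nonneg (zp - 1/2), sq_nonneg (zm - 1/2), mul_nonneg hβp (sq_nonneg (zp - 1/2)), mul_nonneg hβm (sq_nonneg (zm - 1/2))]
end

section
/- Let X be a context space with probability measure, and let κ : X → ℝ_{>0} be measurable with E[κ(X)] < ∞ and E[κ⁻¹(X)] < ∞. Among all measurable w : X → ℝ_{>0} with E[w(X)] = 1, the functional E[w²(X) κ(X)] is minimized by w₀(x) = κ⁻¹(x)/E[κ⁻¹(X)], and the minimum value is 1/E[κ⁻¹(X)]. -/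
open MeasureTheory

/-- among positive weights with unit mean, `E[w² κ]` is minimized by
`w₀ = κ⁻¹ / E[κ⁻¹]`, with minimum value `1 / E[κ⁻¹]`. -/
theorem stmt_6 {X : Type} [MeasurableSpace X] (P : Measure X) [IsProbabilityMeasure P]
    (κ : X → ℝ) (hκmeas : Measurable κ) (hκpos : ∀ x, 0 < κ x)
    (hκint : Integrable κ P) (hκinvint : Integrable (fun x => (κ x)⁻¹) P)
    (w₀ : X → ℝ) (hw₀ : ∀ x, w₀ x = (κ x)⁻¹ / ∫ x, (κ x)⁻¹ ∂P) :
    (∫ x, w₀ x ∂P = 1) ∧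
    (∫ x, (w₀ x) ^ 2 * κ x ∂P = 1 / ∫ x, (κ x)⁻¹ ∂P) ∧
    ∀ w : X → ℝ, Measurable w → (∀ x, 0 < w x) → (∫ x, w x ∂P = 1) →
      Integrable (fun x => (w x) ^ 2 * κ x) P →
      1 / (∫ x, (κ x)⁻¹ ∂P) ≤ ∫ x, (w x) ^ 2 * κ x ∂P := by
  set I : ℝ := ∫ x, (κ x)⁻¹ ∂P with hI
  have hIpos : 0 < I := by
    rw [hI]
    rw [integral_pos_iff_support_of_nonneg
      (fun x => inv_nonneg.mpr (hκpos x).le) hκinvint]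
    have : Function.support (fun x => (κ x)⁻¹) = Set.univ := by
      ext x; simp [Function.support, (hκpos x).ne']
    rw [this]
    simp
  have hIne : I ≠ 0 := hIpos.ne'
  have h1 : ∫ x, w₀ x ∂P = 1 := by
    have : (fun x => w₀ x) = fun x => (κ x)⁻¹ / I := by
      funext x; exact hw₀ x
    rw [this, integral_div, ← hI, div_self hIne]
  refine ⟨h1, ?_, ?_⟩
  · have heq : (fun x => (w₀ x) ^ 2 * κ x) = fun x => (κ x)⁻¹ / I ^ 2 := by
      funext x
      rw [hw₀ x]
      have hk := (hκpos x).ne'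
      field_simp
    rw [heq, integral_div, ← hI]
    rw [div_eq_div_iff (by positivity) hIpos.ne']
    ring
  · intro w hwmeas hwpos hwint hwsq
    have hw_int : Integrable w P := by
      by_contra h
      rw [integral_undef h] at hwint
      norm_num at hwint
    have hpt : ∀ x, 2 * w x / I - (κ x)⁻¹ / I ^ 2 ≤ (w x) ^ 2 * κ x := by
      intro x
      have hk := hκpos x
      have hknz := hk.ne'
      have hsq : 0 ≤ (w x * κ x - 1 / I) ^ 2 * (κ x)⁻¹ :=
        mul_nonneg (sq_nonneg _) (inv_nonneg.mpr hk.le)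
      have expand : (w x * κ x - 1 / I) ^ 2 * (κ x)⁻¹ =
          w x ^ 2 * κ x - 2 * w x / I + (κ x)⁻¹ / I ^ 2 := by
        field_simp
        ring
      linarith [expand ▸ hsq]
    have hlhs_int : Integrable (fun x => 2 * w x / I - (κ x)⁻¹ / I ^ 2) P := by
      exact ((hw_int.const_mul 2).div_const I).sub (hκinvint.div_const _)
    have hmono := integral_mono hlhs_int hwsq hpt
    have hlhs : ∫ x, (2 * w x / I - (κ x)⁻¹ / I ^ 2) ∂P = 1 / I := by
      rw [integral_sub ((hw_int.const_mul 2).div_const I) (hκinvint.div_const _)]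
      rw [integral_div, integral_div, integral_const_mul, hwint, ← hI]
      field_simp
      ring
    linarith [hmono, hlhs.symm.le, hlhs.le]
end

section
/- Let Z be an integrable real random variable with |Z| ≤ λ in L² norm, i.e., E[Z²] ≤ λ². For a weight function w with E[(w(X)−1)²] < ∞, the worst-case retargeting bias satisfies sup over policies π and over μ with ‖μ_max‖_{L²} ≤ λ of |E[(w(X)−1) Σ_a π(a|X) μ(a|X)]| = λ √(E[(w(X)−1)²]), where μ_max(x) = max_a |μ(a|x)|. -/
open MeasureTheory Finset

lemma int_mul_L2 {X : Type} [MeasurableSpace X] {P : Measure X} {f g : X → ℝ}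
    (hf : MemLp f 2 P) (hg : MemLp g 2 P) : Integrable (fun x => f x * g x) P := by
  rw [← memLp_one_iff_integrable]
  exact MemLp.smul (r := 1) hg hf

lemma cs_int {X : Type} [MeasurableSpace X] {P : Measure X} {f g : X → ℝ}
    (hf0 : 0 ≤ᵐ[P] f) (hg0 : 0 ≤ᵐ[P] g)
    (hf : MemLp f 2 P) (hg : MemLp g 2 P) :
    ∫ x, f x * g x ∂P ≤ Real.sqrt (∫ x, f x ^ 2 ∂P) * Real.sqrt (∫ x, g x ^ 2 ∂P) := by
  have h2 : (ENNReal.ofReal 2) = 2 := by simp [ENNReal.ofReal_ofNat]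
  have hpq : Real.HolderConjugate 2 2 := Real.HolderConjugate.two_two
  have h := integral_mul_le_Lp_mul_Lq_of_nonneg hpq hf0 hg0 (h2 ▸ hf) (h2 ▸ hg)
  simp only [Real.rpow_two] at h
  calc ∫ x, f x * g x ∂P ≤ (∫ x, f x ^ 2 ∂P) ^ (1/2:ℝ) * (∫ x, g x ^ 2 ∂P) ^ (1/2:ℝ) := by
        exact_mod_cast h
    _ = Real.sqrt (∫ x, f x ^ 2 ∂P) * Real.sqrt (∫ x, g x ^ 2 ∂P) := by
        rw [← Real.sqrt_eq_rpow, ← Real.sqrt_eq_rpow]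

/-- the worst-case retargeting bias over all policies `π` and all outcome
regressions `μ` with `‖max_a |μ(a|·)|‖_{L²} ≤ λ` equals `λ·√(E[(w(X)−1)²])`. -/
theorem stmt_12 {X A : Type} [MeasurableSpace X] [Fintype A] [Nonempty A]
    (P : Measure X) [IsProbabilityMeasure P]
    (lam : ℝ) (hlam : 0 ≤ lam)
    (w : X → ℝ) (hwmeas : Measurable w)
    (hwint : Integrable (fun x => (w x - 1) ^ 2) P) :
    sSup {v | ∃ (π : X → A → ℝ) (μ : A → X → ℝ),
        (∀ a, Measurable (π · a)) ∧ (∀ a, Measurable (μ a)) ∧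
        (∀ x, (∀ a, 0 ≤ π x a) ∧ ∑ a, π x a = 1) ∧
        Integrable (fun x =>
          (Finset.univ.sup' Finset.univ_nonempty (fun a => |μ a x|)) ^ 2) P ∧
        (∫ x, (Finset.univ.sup' Finset.univ_nonempty (fun a => |μ a x|)) ^ 2 ∂P) ≤ lam ^ 2 ∧
        v = |∫ x, (w x - 1) * ∑ a, π x a * μ a x ∂P|} =
      lam * Real.sqrt (∫ x, (w x - 1) ^ 2 ∂P) := by
  classical
  set S : ℝ := ∫ x, (w x - 1) ^ 2 ∂P with hSdef
  have hS0 : 0 ≤ S := integral_nonneg fun x => sq_nonneg _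
  have hf2 : MemLp (fun x => w x - 1) 2 P :=
    (memLp_two_iff_integrable_sq ((hwmeas.sub measurable_const).aestronglyMeasurable)).mpr hwint
  have ha0 : ∀ x : X, (∀ a : A, (0:ℝ) ≤ if a = Classical.arbitrary A then 1 else 0) ∧
      ∑ a : A, (if a = Classical.arbitrary A then (1:ℝ) else 0) = 1 := by
    intro x
    constructor
    · intro a; split <;> norm_num
    · simp
  apply IsGreatest.csSup_eq
  constructor
  · -- membership: the supremum is attained
    by_cases hS : S = 0
    · refine ⟨fun _ a => if a = Classical.arbitrary A then 1 else 0, fun _ _ => 0,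
        fun a => measurable_const, fun a => measurable_const, ha0, ?_, ?_, ?_⟩
      · simp [Finset.sup'_const]
      · simp [Finset.sup'_const]; positivity
      · simp [hS, Real.sqrt_zero]
    · have hSpos : 0 < S := lt_of_le_of_ne hS0 (Ne.symm hS)
      have hsq : 0 < Real.sqrt S := Real.sqrt_pos.mpr hSpos
      set c : ℝ := lam / Real.sqrt S with hcdef
      have hc0 : 0 ≤ c := div_nonneg hlam hsq.le
      refine ⟨fun _ a => if a = Classical.arbitrary A then 1 else 0,
        fun _ x => c * (w x - 1),
        fun a => measurable_const,
        fun a => measurable_const.mul (hwmeas.sub measurable_const), ha0, ?_, ?_, ?_⟩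
      · simp only [Finset.sup'_const, sq_abs, mul_pow]
        exact hwint.const_mul _
      · simp only [Finset.sup'_const, sq_abs, mul_pow]
        rw [integral_const_mul, ← hSdef]
        have : c ^ 2 = lam ^ 2 / S := by
          rw [hcdef, div_pow, Real.sq_sqrt hS0]
        rw [this, div_mul_cancel₀ _ hS]
      · have hsum : ∀ x, ∑ a : A, (if a = Classical.arbitrary A then (1:ℝ) else 0) *
            (c * (w x - 1)) = c * (w x - 1) := by
          intro x; rw [← Finset.sum_mul, (ha0 x).2, one_mul]
        have hval : (∫ x, (w x - 1) * ∑ a : A,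
            (if a = Classical.arbitrary A then (1:ℝ) else 0) * (c * (w x - 1)) ∂P)
            = c * S := by
          rw [hSdef, ← integral_const_mul]
          refine integral_congr_ae (Filter.Eventually.of_forall fun x => ?_)
          simp only [hsum]; ring
        rw [hval, abs_of_nonneg (mul_nonneg hc0 hS0), hcdef, div_mul_eq_mul_div,
          mul_div_assoc, Real.div_sqrt]
  · -- upper bound
    rintro v ⟨π, μ, hπm, hμm, hπ, hmint, hmle, rfl⟩
    set m : X → ℝ := fun x => Finset.univ.sup' Finset.univ_nonempty (fun a => |μ a x|) with hmdef
    have hm_meas : Measurable m := by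
      have h := Finset.measurable_sup' (univ_nonempty (α := A)) (fun (a : A) _ => (hμm a).abs)
      have he : m = Finset.univ.sup' Finset.univ_nonempty (fun (a : A) (x : X) => |μ a x|) := by
        funext x; rw [Finset.sup'_apply]
      rw [he]; exact h
    have hm0 : ∀ x, 0 ≤ m x := fun x =>
      le_trans (abs_nonneg (μ (Classical.arbitrary A) x))
        (Finset.le_sup' (fun a => |μ a x|) (mem_univ (Classical.arbitrary A)))
    have hm2 : MemLp m 2 P :=
      (memLp_two_iff_integrable_sq hm_meas.aestronglyMeasurable).mpr hmint
    have hfabs : MemLp (fun x => |w x - 1|) 2 P := by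
      simpa [Real.norm_eq_abs] using hf2.norm
    have hpt : ∀ x, |(w x - 1) * ∑ a, π x a * μ a x| ≤ |w x - 1| * m x := by
      intro x
      rw [abs_mul]
      refine mul_le_mul_of_nonneg_left ?_ (abs_nonneg _)
      calc |∑ a, π x a * μ a x| ≤ ∑ a, |π x a * μ a x| := Finset.abs_sum_le_sum_abs _ _
        _ = ∑ a, π x a * |μ a x| := by
            refine Finset.sum_congr rfl fun a _ => ?_
            rw [abs_mul, abs_of_nonneg ((hπ x).1 a)]
        _ ≤ ∑ a, π x a * m x := by
            refine Finset.sum_le_sum fun a _ => ?_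
            exact mul_le_mul_of_nonneg_left (Finset.le_sup' (fun a => |μ a x|) (mem_univ a)) ((hπ x).1 a)
        _ = m x := by rw [← Finset.sum_mul, (hπ x).2, one_mul]
    calc |∫ x, (w x - 1) * ∑ a, π x a * μ a x ∂P|
        ≤ ∫ x, |(w x - 1) * ∑ a, π x a * μ a x| ∂P := by
          simpa only [Real.norm_eq_abs] using
            norm_integral_le_integral_norm (μ := P) (fun x => (w x - 1) * ∑ a, π x a * μ a x)
      _ ≤ ∫ x, |w x - 1| * m x ∂P := by
          refine integral_mono_of_nonneg (Filter.Eventually.of_forall fun x => abs_nonneg _)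
            (int_mul_L2 hfabs hm2) (Filter.Eventually.of_forall hpt)
      _ ≤ Real.sqrt (∫ x, |w x - 1| ^ 2 ∂P) * Real.sqrt (∫ x, m x ^ 2 ∂P) :=
          cs_int (Filter.Eventually.of_forall fun x => abs_nonneg _)
            (Filter.Eventually.of_forall hm0) hfabs hm2
      _ ≤ lam * Real.sqrt S := by
          simp only [sq_abs, ← hSdef]
          rw [mul_comm lam]
          refine mul_le_mul_of_nonneg_left ?_ (Real.sqrt_nonneg _)
          calc Real.sqrt (∫ x, m x ^ 2 ∂P) ≤ Real.sqrt (lam ^ 2) := Real.sqrt_le_sqrt hmle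
            _ = lam := Real.sqrt_sq hlam
end

section
/- Let κ : X → ℝ_{>0} and λ ≥ 0 with suitable integrability. Among measurable w : X → ℝ with E[w(X)] = 1, the functional E[(1/4)κ(X)w²(X) + λ²(w(X)−1)²] is minimized by w₀(x) ∝ (κ(x) + 4λ²)⁻¹ (normalized so E[w₀(X)] = 1). -/
open MeasureTheory

/-- among weights with unit mean, the bias-regularized objective
`E[(1/4)κ w² + λ²(w−1)²]` is minimized by `w₀ ∝ (κ + 4λ²)⁻¹` (normalized to unit mean). -/
theorem stmt_13 {X : Type} [MeasurableSpace X] (P : Measure X) [IsProbabilityMeasure P]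
    (κ : X → ℝ) (hκmeas : Measurable κ) (hκpos : ∀ x, 0 < κ x)
    (hκint : Integrable κ P)
    (lam : ℝ) (hlam : 0 ≤ lam)
    (hinvint : Integrable (fun x => (κ x + 4 * lam ^ 2)⁻¹) P)
    (w₀ : X → ℝ)
    (hw₀ : ∀ x, w₀ x = (κ x + 4 * lam ^ 2)⁻¹ / ∫ x, (κ x + 4 * lam ^ 2)⁻¹ ∂P) :
    (∫ x, w₀ x ∂P = 1) ∧
    ∀ w : X → ℝ, Measurable w → (∫ x, w x ∂P = 1) →
      Integrable (fun x => (1 / 4) * κ x * (w x) ^ 2 + lam ^ 2 * (w x - 1) ^ 2) P →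
      (∫ x, (1 / 4) * κ x * (w₀ x) ^ 2 + lam ^ 2 * (w₀ x - 1) ^ 2 ∂P) ≤
        ∫ x, (1 / 4) * κ x * (w x) ^ 2 + lam ^ 2 * (w x - 1) ^ 2 ∂P := by
  set a : X → ℝ := fun x => κ x + 4 * lam ^ 2 with ha_def
  have ha : ∀ x, 0 < a x := fun x => by
    simp only [ha_def]; nlinarith [hκpos x, sq_nonneg lam]
  have hane : ∀ x, κ x + 4 * lam ^ 2 ≠ 0 := fun x => (ha x).ne'
  set c : ℝ := ∫ x, (a x)⁻¹ ∂P with hc_def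
  have hc : 0 < c := by
    apply integral_pos_iff_support_of_nonneg (fun x => (inv_pos.mpr (ha x)).le) hinvint |>.mpr
    have hs : Function.support (fun x => (a x)⁻¹) = Set.univ := by
      ext x
      simp only [Function.support, Set.mem_setOf_eq, Set.mem_univ, iff_true, ne_eq,
        inv_eq_zero]
      exact (ha x).ne'
    simp [hs]
  have hcne : c ≠ 0 := hc.ne'
  have hw₀fun : w₀ = fun x => (a x)⁻¹ / c := funext hw₀
  have hw₀int : Integrable w₀ P := by
    rw [hw₀fun]; exact hinvint.div_const c
  have hmean : ∫ x, w₀ x ∂P = 1 := by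
    rw [hw₀fun, integral_div]
    exact div_self hcne
  refine ⟨hmean, fun w hwmeas hwmean hwint => ?_⟩
  have hwInt : Integrable w P := by
    by_contra h
    rw [integral_undef h] at hwmean; norm_num at hwmean
  set K : ℝ := 1 / (2 * c) - 2 * lam ^ 2 with hK_def
  have hgw₀eq : (fun x => (1 / 4) * κ x * (w₀ x) ^ 2 + lam ^ 2 * (w₀ x - 1) ^ 2)
      = fun x => (1 / (4 * c ^ 2) - 2 * lam ^ 2 / c) * (a x)⁻¹ + lam ^ 2 := by
    funext x
    rw [hw₀ x]
    simp only [ha_def]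
    have h2 := hane x
    field_simp
    ring
  have hgw₀int : Integrable (fun x => (1 / 4) * κ x * (w₀ x) ^ 2 + lam ^ 2 * (w₀ x - 1) ^ 2) P := by
    rw [hgw₀eq]
    exact (hinvint.const_mul _).add (integrable_const _)
  have hpt : ∀ x, (1 / 4) * κ x * (w₀ x) ^ 2 + lam ^ 2 * (w₀ x - 1) ^ 2 + K * (w x - w₀ x)
      ≤ (1 / 4) * κ x * (w x) ^ 2 + lam ^ 2 * (w x - 1) ^ 2 := by
    intro x
    have hax := ha x
    have hbv : a x * w₀ x = 1 / c := by
      rw [hw₀ x]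
      simp only [ha_def]
      field_simp
      exact div_self (hane x)
    have hb2 : 1 / (2 * c) = a x * w₀ x / 2 := by rw [hbv]; ring
    have hκ : κ x = a x - 4 * lam ^ 2 := by simp only [ha_def]; ring
    rw [hK_def, hb2, hκ]
    nlinarith [mul_nonneg hax.le (sq_nonneg (w x - w₀ x))]
  have hsubint : Integrable (fun x => K * (w x - w₀ x)) P := (hwInt.sub hw₀int).const_mul K
  have hLHSint : Integrable (fun x => (1 / 4) * κ x * (w₀ x) ^ 2 + lam ^ 2 * (w₀ x - 1) ^ 2
      + K * (w x - w₀ x)) P := hgw₀int.add hsubint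
  have hineq := integral_mono hLHSint hwint hpt
  have hsplit : ∫ x, ((1 / 4) * κ x * (w₀ x) ^ 2 + lam ^ 2 * (w₀ x - 1) ^ 2
      + K * (w x - w₀ x)) ∂P
      = (∫ x, (1 / 4) * κ x * (w₀ x) ^ 2 + lam ^ 2 * (w₀ x - 1) ^ 2 ∂P)
        + K * ∫ x, (w x - w₀ x) ∂P := by
    rw [integral_add hgw₀int hsubint, integral_const_mul]
  rw [hsplit, integral_sub hwInt hw₀int, hwmean, hmean] at hineq
  simpa using hineq
end
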